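/- Let D be a simple directed graph on n vertices and m edges with out-degree sequence d_1^+, ..., d_n^+. Then allarb(D) ≤ (1/(n-1))^{(n-1)/2} · (Σ_{i=1}^n (d_i^+)² + m)^{(n-1)/2}. -/

import Mathlib

open Matrix BigOperators Finset Polynomial

/-- A digraph on `n` vertices is given by edge multiplicities `D i j`. Out-degree of `i`. -/
def outdeg {n : ℕ} (D : Fin n → Fin n → ℕ) (i : Fin n) : ℕ := ∑ j, D i j

/-- In-degree of `i`. -/
def indeg {n : ℕ} (D : Fin n → Fin n → ℕ) (i : Fin n) : ℕ := ∑ j, D j i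

/-- The (out-degree) Laplacian matrix of a digraph. -/
def lap {n : ℕ} (D : Fin n → Fin n → ℕ) : Matrix (Fin n) (Fin n) ℤ :=
  Matrix.of fun i j => if i = j then (outdeg D i : ℤ) else -(D i j : ℤ)

/-- The number of arborescences rooted at `v` (via Tutte's matrix-tree theorem):
the determinant of the Laplacian with row and column `v` deleted. -/
def arb {n : ℕ} (D : Fin n → Fin n → ℕ) (v : Fin n) : ℤ :=
  ((lap D).submatrix (fun i : {j : Fin n // j ≠ v} => (i : Fin n))
    (fun j : {j : Fin n // j ≠ v} => (j : Fin n))).det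

/-- The total number of arborescences over all roots. -/
def allarb {n : ℕ} (D : Fin n → Fin n → ℕ) : ℤ := ∑ v, arb D v

/-- A tournament: no loops, and exactly one arc between any two distinct vertices. -/
def IsTournament {n : ℕ} (D : Fin n → Fin n → ℕ) : Prop :=
  (∀ i, D i i = 0) ∧ ∀ i j, i ≠ j → D i j + D j i = 1


set_option linter.unusedSectionVars false

lemma conj_mul' (z : ℂ) : (starRingEnd ℂ) z * z = ↑(Complex.normSq z) := by
  rw [mul_comm, Complex.mul_conj]

section conj
variable {m : Type*} [Fintype m] [DecidableEq m]

lemma conj_det (P A : Matrix m m ℂ) (h : star P * P = 1) :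
    (star P * A * P).det = A.det := by
  have h1 : (star P).det * P.det = 1 := by rw [← Matrix.det_mul, h, Matrix.det_one]
  rw [Matrix.det_mul, Matrix.det_mul]
  linear_combination A.det * h1

lemma conj_trace_adj (P A : Matrix m m ℂ) (h : star P * P = 1) :
    (star P * A * P).adjugate.trace = A.adjugate.trace := by
  have h' : P * star P = 1 := mul_eq_one_comm.mp h
  rw [Matrix.adjugate_mul_distrib, Matrix.adjugate_mul_distrib]
  rw [Matrix.trace_mul_comm, Matrix.mul_assoc, ← Matrix.adjugate_mul_distrib, h',
    Matrix.adjugate_one, Matrix.mul_one]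

lemma trace_star_self (X : Matrix m m ℂ) :
    (star X * X).trace = ((∑ i, ∑ j, Complex.normSq (X i j) : ℝ) : ℂ) := by
  rw [Matrix.trace]
  push_cast
  rw [Finset.sum_comm]
  refine Finset.sum_congr rfl fun j _ => ?_
  rw [Matrix.diag_apply, Matrix.mul_apply]
  refine Finset.sum_congr rfl fun i _ => ?_
  rw [Matrix.star_apply, RCLike.star_def, conj_mul']

lemma conj_frob (P A : Matrix m m ℂ) (h : star P * P = 1) :
    (∑ i, ∑ j, Complex.normSq ((star P * A * P) i j)) = ∑ i, ∑ j, Complex.normSq (A i j) := by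
  have h' : P * star P = 1 := mul_eq_one_comm.mp h
  have hs : star (star P * A * P) = star P * star A * P := by
    rw [StarMul.star_mul, StarMul.star_mul, star_star, ← Matrix.mul_assoc]
  have key : (star (star P * A * P) * (star P * A * P)).trace = (star A * A).trace := by
    rw [hs]
    have e1 : star P * star A * P * (star P * A * P) = star P * (star A * A) * P := by
      simp only [Matrix.mul_assoc]
      rw [show P * (star P * (A * P)) = A * P by rw [← Matrix.mul_assoc, h', Matrix.one_mul]]
    rw [e1, Matrix.trace_mul_comm, ← Matrix.mul_assoc, Matrix.mul_assoc P (star P),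
      ← Matrix.mul_assoc P, h', Matrix.one_mul]
  rw [trace_star_self, trace_star_self] at key
  exact_mod_cast key

end conj

lemma exists_unitary_col (n : ℕ) (u : Fin (n+1) → ℂ)
    (hu : ∑ i, (starRingEnd ℂ) (u i) * u i = 1) :
    ∃ P : Matrix (Fin (n+1)) (Fin (n+1)) ℂ, star P * P = 1 ∧ ∀ l, P l 0 = u l := by
  classical
  let u' : EuclideanSpace ℂ (Fin (n+1)) := (WithLp.equiv 2 _).symm u
  have hcard : Module.finrank ℂ (EuclideanSpace ℂ (Fin (n+1))) = Fintype.card (Fin (n+1)) := by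
    simp
  have horth : Orthonormal ℂ (({0} : Set (Fin (n+1))).restrict (fun _ => u')) := by
    rw [orthonormal_iff_ite]
    rintro ⟨i, hi⟩ ⟨j, hj⟩
    simp only [Set.mem_singleton_iff] at hi hj
    subst hi; subst hj
    simp only [Set.restrict_apply, if_pos]
    rw [PiLp.inner_apply]
    refine (Finset.sum_congr rfl fun k _ => ?_).trans hu
    simp only [RCLike.inner_apply]
    exact mul_comm _ _
  obtain ⟨b, hb⟩ := horth.exists_orthonormalBasis_extension_of_card_eq hcard
  have hb0 : b 0 = u' := hb 0 rfl
  refine ⟨Matrix.of fun i j => b j i, ?_, ?_⟩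
  · ext i j
    simp only [Matrix.mul_apply, Matrix.star_apply, Matrix.of_apply, RCLike.star_def]
    have := (orthonormal_iff_ite (𝕜 := ℂ)).mp b.orthonormal i j
    rw [PiLp.inner_apply] at this
    simp only [RCLike.inner_apply] at this
    rw [show ∑ k, (starRingEnd ℂ) (b i k) * b j k = _ from (Finset.sum_congr rfl fun k _ => mul_comm _ _).trans this]
    simp [Matrix.one_apply]
  · intro l
    simp [hb0, u']

/-- Key spectral lemma: pseudo-eigenvalues with determinant, adjugate-trace and Schur bound. -/
lemma key_spectral : ∀ {n : ℕ} (A : Matrix (Fin n) (Fin n) ℂ), ∃ d : Fin n → ℂ,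
    (∏ i, d i) = A.det ∧
    (A.adjugate.trace = ∑ i, ∏ j, (if j = i then 1 else d j)) ∧
    ((∑ i, Complex.normSq (d i)) ≤ ∑ i, ∑ j, Complex.normSq (A i j)) := by
  intro n
  induction n with
  | zero =>
    intro A
    exact ⟨fun _ => 0, by simp, by simp [Matrix.trace], by simp⟩
  | succ n IH =>
    intro A
    -- find a normalized eigenvector
    obtain ⟨μ, v, hv0, hAv⟩ : ∃ (μ : ℂ) (v : Fin (n+1) → ℂ), v ≠ 0 ∧ A.mulVec v = μ • v := by
      obtain ⟨μ, hμ⟩ := Module.End.exists_eigenvalue (Matrix.mulVecLin A)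
      obtain ⟨v, hv⟩ := hμ.exists_hasEigenvector
      exact ⟨μ, v, hv.right, by simpa [Matrix.mulVecLin_apply] using hv.apply_eq_smul⟩
    set c : ℝ := Real.sqrt (∑ i, Complex.normSq (v i)) with hc
    have hsum_pos : 0 < ∑ i, Complex.normSq (v i) := by
      obtain ⟨i, hi⟩ := Function.ne_iff.mp hv0
      have h1 : 0 < Complex.normSq (v i) := by
        simpa [Complex.normSq_pos] using hi
      exact lt_of_lt_of_le h1 (Finset.single_le_sum (fun j _ => Complex.normSq_nonneg (v j))
        (Finset.mem_univ i))
    have hcpos : 0 < c := Real.sqrt_pos.mpr hsum_pos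
    have hcne : (c : ℂ) ≠ 0 := by exact_mod_cast hcpos.ne'
    set u : Fin (n+1) → ℂ := ((c : ℂ))⁻¹ • v with hudef
    have hu : ∑ i, (starRingEnd ℂ) (u i) * u i = 1 := by
      have hsq : (c : ℝ) ^ 2 = ∑ i, Complex.normSq (v i) := Real.sq_sqrt hsum_pos.le
      have : ∑ i, (starRingEnd ℂ) (u i) * u i
          = ((c : ℂ))⁻¹ * ((c : ℂ))⁻¹ * ∑ i, ((Complex.normSq (v i) : ℝ) : ℂ) := by
        rw [Finset.mul_sum]
        refine Finset.sum_congr rfl fun i _ => ?_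
        simp only [hudef, Pi.smul_apply, smul_eq_mul, _root_.map_mul, map_inv₀,
          Complex.conj_ofReal]
        rw [mul_mul_mul_comm, conj_mul' (v i)]
      rw [this]
      rw [← Complex.ofReal_sum, ← hsq]
      push_cast
      rw [sq]
      field_simp
    have hAu : A.mulVec u = μ • u := by
      rw [hudef, Matrix.mulVec_smul, hAv, smul_comm]
    obtain ⟨P, hP, hPcol⟩ := exists_unitary_col n u hu
    have hP' : P * star P = 1 := mul_eq_one_comm.mp hP
    set M := star P * A * P with hMdef
    have hM0 : ∀ i, M i 0 = if i = 0 then μ else 0 := by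
      intro i
      have h1 : ∀ r, (A * P) r 0 = μ * P r 0 := by
        intro r
        have e : (A * P) r 0 = (A.mulVec u) r := by
          rw [Matrix.mul_apply, Matrix.mulVec, dotProduct]
          exact Finset.sum_congr rfl fun l _ => by rw [hPcol l]
        rw [e, hAu, Pi.smul_apply, smul_eq_mul, hPcol r]
      calc M i 0 = ∑ r, (star P) i r * (A * P) r 0 := by
            rw [hMdef, Matrix.mul_assoc, Matrix.mul_apply]
        _ = μ * ∑ r, (star P) i r * P r 0 := by
            rw [Finset.mul_sum]
            exact Finset.sum_congr rfl fun r _ => by rw [h1]; ring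
        _ = μ * (star P * P) i 0 := by rw [Matrix.mul_apply]
        _ = if i = 0 then μ else 0 := by
            rw [hP, Matrix.one_apply]
            split <;> simp
    have hdet : M.det = A.det := conj_det P A hP
    have htr : M.adjugate.trace = A.adjugate.trace := conj_trace_adj P A hP
    have hfrob : (∑ i, ∑ j, Complex.normSq (M i j)) = ∑ i, ∑ j, Complex.normSq (A i j) :=
      conj_frob P A hP
    clear_value M
    cases n with
    | zero =>
      refine ⟨fun _ => A 0 0, by simp [Matrix.det_fin_one], ?_, by simp⟩
      simp [Matrix.adjugate_fin_one, Matrix.trace]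
    | succ k =>
      set B := M.submatrix Fin.succ Fin.succ with hBdef
      have hMB : M.det = μ * B.det := by
        rw [Matrix.det_succ_column_zero]
        rw [Finset.sum_eq_single 0]
        · rw [hM0 0, if_pos rfl]
          simp [hBdef, Fin.succAbove_zero]
        · intro i _ hi
          rw [hM0 i, if_neg hi]
          ring
        · simp
      have hadjdiag : ∀ i : Fin (k+1), M.adjugate i.succ i.succ = μ * B.adjugate i i := by
        intro i
        rw [Matrix.adjugate_fin_succ_eq_det_submatrix, Matrix.adjugate_fin_succ_eq_det_submatrix]
        have hs1 : ((-1 : ℂ)) ^ ((i.succ : ℕ) + (i.succ : ℕ)) = 1 := by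
          rw [← two_mul, pow_mul]; simp
        have hs2 : ((-1 : ℂ)) ^ ((i : ℕ) + (i : ℕ)) = 1 := by
          rw [← two_mul, pow_mul]; simp
        rw [hs1, hs2, one_mul, one_mul]
        rw [Matrix.det_succ_column_zero]
        rw [Finset.sum_eq_single 0]
        · have h00 : (M.submatrix (i.succ.succAbove) (i.succ.succAbove)) 0 0 = μ := by
            rw [Matrix.submatrix_apply, Fin.succ_succAbove_zero, hM0, if_pos rfl]
          have hrest : (M.submatrix (i.succ.succAbove) (i.succ.succAbove)).submatrix
              (Fin.succAbove 0) Fin.succ = B.submatrix i.succAbove i.succAbove := by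
            ext a c
            simp only [Matrix.submatrix_apply, Fin.succAbove_zero, hBdef,
              Fin.succ_succAbove_succ]
          rw [h00, hrest]
          simp
        · intro l _ hl
          have : (M.submatrix (i.succ.succAbove) (i.succ.succAbove)) l 0 = 0 := by
            rw [Matrix.submatrix_apply, Fin.succ_succAbove_zero, hM0, if_neg]
            intro h
            apply hl
            apply Fin.succAbove_right_injective (p := i.succ)
            rw [h, Fin.succ_succAbove_zero]
          rw [this]
          ring
        · simp
      have hadj : M.adjugate.trace = B.det + μ * B.adjugate.trace := by
        rw [Matrix.trace]
        rw [Fin.sum_univ_succ]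
        congr 1
        · rw [Matrix.diag_apply, Matrix.adjugate_fin_succ_eq_det_submatrix]
          simp [hBdef, Fin.succAbove_zero]
        · rw [Matrix.trace, Finset.mul_sum]
          exact Finset.sum_congr rfl fun i _ => hadjdiag i
      obtain ⟨d', hd1, hd2, hd3⟩ := IH B
      refine ⟨Fin.cons μ d', ?_, ?_, ?_⟩
      · rw [Fin.prod_univ_succ]
        simp only [Fin.cons_zero, Fin.cons_succ]
        rw [hd1, ← hMB, hdet]
      · have hL : A.adjugate.trace
            = (∏ i, d' i) + μ * ∑ i, ∏ j, (if j = i then 1 else d' j) := by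
          rw [← htr, hadj, hd2, hd1]
        have e0 : (∏ j : Fin (k+1+1), if j = (0 : Fin (k+1+1)) then 1 else Fin.cons μ d' j)
            = ∏ j, d' j := by
          rw [Fin.prod_univ_succ]
          simp [Fin.succ_ne_zero]
        have es : ∀ i : Fin (k+1),
            (∏ j : Fin (k+1+1), if j = i.succ then 1 else Fin.cons μ d' j)
            = μ * ∏ j, (if j = i then 1 else d' j) := by
          intro i
          rw [Fin.prod_univ_succ]
          simp only [Fin.cons_zero, Fin.cons_succ, Fin.succ_inj]
          rw [if_neg (by simp [eq_comm, Fin.succ_ne_zero] : ¬ ((0 : Fin (k+1+1)) = i.succ))]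
        rw [hL]
        conv_rhs => rw [Fin.sum_univ_succ]
        rw [e0]
        congr 1
        rw [Finset.mul_sum]
        exact Finset.sum_congr rfl fun i _ => (es i).symm
      · -- Schur bound
        have hB : ∀ i j, B i j = M i.succ j.succ := fun i j => rfl
        have h1 : (∑ i, Complex.normSq ((Fin.cons μ d' : Fin (k+1+1) → ℂ) i))
            = Complex.normSq μ + ∑ i, Complex.normSq (d' i) := by
          rw [Fin.sum_univ_succ]
          simp
        have h2 : (∑ i, ∑ j, Complex.normSq (M i j))
            = (∑ j, Complex.normSq (M 0 j))
              + ∑ i : Fin (k+1), (Complex.normSq (M i.succ 0)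
                  + ∑ j : Fin (k+1), Complex.normSq (B i j)) := by
          rw [Fin.sum_univ_succ]
          congr 1
          refine Finset.sum_congr rfl fun i _ => ?_
          rw [Fin.sum_univ_succ]
          simp [hBdef]
        have h3 : Complex.normSq μ ≤ ∑ j, Complex.normSq (M 0 j) := by
          have : Complex.normSq (M 0 0) = Complex.normSq μ := by rw [hM0]; simp
          rw [← this]
          exact Finset.single_le_sum (fun j _ => Complex.normSq_nonneg _) (Finset.mem_univ 0)
        have h4 : (∑ i : Fin (k+1), ∑ j : Fin (k+1), Complex.normSq (B i j))
            ≤ ∑ i : Fin (k+1), (Complex.normSq (M i.succ 0)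
                + ∑ j : Fin (k+1), Complex.normSq (B i j)) :=
          Finset.sum_le_sum fun i _ => le_add_of_nonneg_left (Complex.normSq_nonneg _)
        rw [h1, ← hfrob, h2]
        have := add_le_add h3 (le_trans hd3 h4)
        linarith

lemma arb_eq_adj {m : ℕ} (D : Fin (m+1) → Fin (m+1) → ℕ) (v : Fin (m+1)) :
    arb D v = (lap D).adjugate v v := by
  classical
  have hbij : Function.Bijective
      (fun i : Fin m => (⟨v.succAbove i, Fin.succAbove_ne v i⟩ : {j : Fin (m+1) // j ≠ v})) := by
    rw [Fintype.bijective_iff_injective_and_card]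
    constructor
    · intro a b hab
      exact Fin.succAbove_right_injective (congrArg Subtype.val hab)
    · simp [Fintype.card_subtype_compl]
  have h1 : arb D v = ((lap D).submatrix v.succAbove v.succAbove).det := by
    rw [arb, ← Matrix.det_submatrix_equiv_self (Equiv.ofBijective _ hbij),
      Matrix.submatrix_submatrix]
    rfl
  rw [h1, Matrix.adjugate_fin_succ_eq_det_submatrix]
  have : ((-1 : ℤ)) ^ ((v : ℕ) + (v : ℕ)) = 1 := by
    rw [← two_mul, pow_mul]; simp
  rw [this, one_mul]

lemma allarb_eq_trace {m : ℕ} (D : Fin (m+1) → Fin (m+1) → ℕ) :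
    allarb D = (lap D).adjugate.trace := by
  rw [allarb, Matrix.trace]
  exact Finset.sum_congr rfl fun v _ => arb_eq_adj D v

lemma lap_row_sum {n : ℕ} (D : Fin n → Fin n → ℕ) (hloop : ∀ i, D i i = 0) (i : Fin n) :
    ∑ j, lap D i j = 0 := by
  classical
  have h1 : ∑ j, lap D i j = lap D i i + ∑ j ∈ univ.erase i, lap D i j :=
    (Finset.add_sum_erase _ _ (mem_univ i)).symm
  have h2 : lap D i i = (outdeg D i : ℤ) := by simp [lap]
  have h3 : ∑ j ∈ univ.erase i, lap D i j = -∑ j ∈ univ.erase i, (D i j : ℤ) := by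
    rw [← Finset.sum_neg_distrib]
    refine Finset.sum_congr rfl fun j hj => ?_
    have : i ≠ j := (Finset.ne_of_mem_erase hj).symm
    simp [lap, this]
  have h4 : ∑ j ∈ univ.erase i, (D i j : ℤ) = (outdeg D i : ℤ) := by
    have h5 := Finset.add_sum_erase univ (fun j => (D i j : ℤ)) (mem_univ i)
    have h6 : ((D i i : ℕ) : ℤ) = 0 := by rw [hloop i]; simp
    rw [outdeg]
    push_cast
    linarith
  rw [h1, h2, h3, h4]
  ring

theorem stmt10 {n : ℕ} (D : Fin n → Fin n → ℕ) (hloop : ∀ i, D i i = 0)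
    (hsimple : ∀ i j, D i j ≤ 1) :
    (allarb D : ℝ) ≤ (((n : ℝ) - 1)⁻¹) ^ (((n : ℝ) - 1) / 2) *
      ((∑ i, (outdeg D i : ℝ) ^ 2) + (∑ i, ∑ j, (D i j : ℝ))) ^ (((n : ℝ) - 1) / 2) := by
  classical
  match n, D, hloop, hsimple with
  | 0, D, hloop, hsimple =>
    have h1 : allarb D = 0 := by simp [allarb]
    have h2 : ((∑ i, (outdeg D i : ℝ) ^ 2) + (∑ i, ∑ j, (D i j : ℝ))) = 0 := by simp
    rw [h1, h2, Real.zero_rpow (by norm_num : (((0:ℕ) : ℝ) - 1) / 2 ≠ 0)]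
    simp
  | 1, D, hloop, hsimple =>
    have h0 : (((1:ℕ) : ℝ) - 1) / 2 = 0 := by norm_num
    haveI hie : IsEmpty {j : Fin 1 // j ≠ 0} := ⟨fun ⟨j, hj⟩ => hj (Subsingleton.elim j 0)⟩
    have h1 : allarb D = 1 := by
      rw [allarb, Fin.sum_univ_one, arb, Matrix.det_isEmpty]
    rw [h0, h1, Real.rpow_zero, Real.rpow_zero]
    norm_num
  | (m+2), D, hloop, hsimple =>
    set L : Matrix (Fin (m+2)) (Fin (m+2)) ℂ := (lap D).map (Int.cast : ℤ → ℂ) with hL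
    have htr : ((allarb D : ℤ) : ℂ) = L.adjugate.trace := by
      rw [allarb_eq_trace D, hL,
        show (lap D).map (Int.cast : ℤ → ℂ) = (Int.castRingHom ℂ).mapMatrix (lap D) from rfl,
        ← RingHom.map_adjugate]
      rw [Matrix.trace, Matrix.trace]
      push_cast
      rfl
    have hdet0 : L.det = 0 := by
      rw [← Matrix.exists_mulVec_eq_zero_iff]
      refine ⟨fun _ => 1, fun h => by simpa using congrFun h 0, ?_⟩
      funext i
      have : (L.mulVec fun _ => 1) i = ((∑ j, lap D i j : ℤ) : ℂ) := by
        rw [Matrix.mulVec, dotProduct]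
        push_cast
        simp [hL]
      rw [this, lap_row_sum D hloop i]
      simp
    obtain ⟨d, hd1, hd2, hd3⟩ := key_spectral L
    obtain ⟨k0, _, hk0⟩ := Finset.prod_eq_zero_iff.mp (hd1.trans hdet0)
    have hS : ((allarb D : ℤ) : ℂ) = ∏ j, (if j = k0 then 1 else d j) := by
      rw [htr, hd2, Finset.sum_eq_single k0]
      · intro i _ hik
        exact Finset.prod_eq_zero (mem_univ k0) (by rw [if_neg (Ne.symm hik), hk0])
      · intro h
        exact absurd (mem_univ k0) h
    -- pass to absolute values
    set s : Finset (Fin (m+2)) := univ.erase k0 with hs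
    set a : Fin (m+2) → ℝ := fun j => ‖d j‖ with ha
    have hcard : s.card = m+1 := by
      rw [hs, Finset.card_erase_of_mem (mem_univ k0), Finset.card_univ, Fintype.card_fin]
      omega
    have hN0 : ((m:ℝ) + 1) ≠ 0 := by positivity
    have habs : (allarb D : ℝ) ≤ ∏ j ∈ s, a j := by
      have h1 : (allarb D : ℝ) = ((allarb D : ℤ) : ℂ).re := by simp
      have h2 : ((allarb D : ℤ) : ℂ).re ≤ ‖((allarb D : ℤ) : ℂ)‖ :=
        Complex.re_le_norm _
      have h3 : ‖((allarb D : ℤ) : ℂ)‖ = ∏ j, (if j = k0 then 1 else a j) := by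
        rw [hS, norm_prod]
        exact Finset.prod_congr rfl fun j _ => by split_ifs <;> simp [ha]
      have h4 : (∏ j, (if j = k0 then 1 else a j)) = ∏ j ∈ s, a j := by
        rw [hs, ← Finset.prod_erase (f := fun j => if j = k0 then 1 else a j) univ
          (if_pos rfl)]
        exact Finset.prod_congr rfl fun j hj => if_neg (Finset.ne_of_mem_erase hj)
      rw [h1]
      calc ((allarb D : ℤ) : ℂ).re ≤ _ := h2
        _ = _ := h3
        _ = _ := h4
    -- AM-GM
    set z : Fin (m+2) → ℝ := fun j => Complex.normSq (d j) with hz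
    have hzn : ∀ j, 0 ≤ z j := fun j => Complex.normSq_nonneg _
    have hw' : ∑ _j ∈ s, ((m:ℝ)+1)⁻¹ = 1 := by
      rw [Finset.sum_const, hcard, nsmul_eq_mul]
      push_cast
      field_simp
    have hgm : (∏ j ∈ s, z j ^ (((m:ℝ)+1)⁻¹)) ≤ ∑ j ∈ s, ((m:ℝ)+1)⁻¹ * z j :=
      Real.geom_mean_le_arith_mean_weighted s _ z (fun _ _ => by positivity) hw'
        (fun j _ => hzn j)
    set base : ℝ := (∑ i, (outdeg D i : ℝ) ^ 2) + (∑ i, ∑ j, (D i j : ℝ)) with hbase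
    have hbase_nonneg : 0 ≤ base := by
      rw [hbase]
      positivity
    have hF : (∑ i, ∑ j, Complex.normSq (L i j)) = base := by
      rw [hbase]
      have hrow : ∀ i, (∑ j, Complex.normSq (L i j))
          = (outdeg D i : ℝ) ^ 2 + ∑ j, (D i j : ℝ) := by
        intro i
        have e1 : ∀ j, Complex.normSq (L i j) = ((lap D i j : ℝ)) ^ 2 := by
          intro j
          rw [hL, Matrix.map_apply]
          rw [show ((lap D i j : ℤ) : ℂ) = (((lap D i j : ℤ) : ℝ) : ℂ) by push_cast; rfl]
          rw [Complex.normSq_ofReal, sq]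
        simp_rw [e1]
        rw [← Finset.add_sum_erase _ _ (mem_univ i)]
        have e2 : ((lap D i i : ℤ) : ℝ) ^ 2 = (outdeg D i : ℝ) ^ 2 := by
          simp [lap]
        have e3 : ∑ j ∈ univ.erase i, ((lap D i j : ℤ) : ℝ) ^ 2 = ∑ j, (D i j : ℝ) := by
          rw [← Finset.add_sum_erase _ (fun j => (D i j : ℝ)) (mem_univ i)]
          rw [hloop i]
          rw [Nat.cast_zero, zero_add]
          refine Finset.sum_congr rfl fun j hj => ?_
          have hji : i ≠ j := (Finset.ne_of_mem_erase hj).symm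
          have h01 : D i j = 0 ∨ D i j = 1 := Nat.le_one_iff_eq_zero_or_eq_one.mp (hsimple i j)
          rcases h01 with h | h <;> simp [lap, hji, h]
        rw [e2, e3]
      rw [Finset.sum_congr rfl fun i _ => hrow i, Finset.sum_add_distrib]
    have hzsum : ∑ j ∈ s, z j ≤ base := by
      calc ∑ j ∈ s, z j ≤ ∑ j, z j :=
            Finset.sum_le_sum_of_subset_of_nonneg (Finset.subset_univ s)
              (fun j _ _ => hzn j)
        _ ≤ ∑ i, ∑ j, Complex.normSq (L i j) := hd3
        _ = base := hF
    have harith : ∑ j ∈ s, ((m:ℝ)+1)⁻¹ * z j ≤ ((m:ℝ)+1)⁻¹ * base := by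
      rw [← Finset.mul_sum]
      exact mul_le_mul_of_nonneg_left hzsum (by positivity)
    -- raise to the power (m+1)/2
    have hexp : (((m+2:ℕ) : ℝ) - 1) / 2 = ((m:ℝ)+1) / 2 := by push_cast; ring
    have hlift : (∏ j ∈ s, a j)
        = (∏ j ∈ s, z j ^ (((m:ℝ)+1)⁻¹)) ^ (((m:ℝ)+1)/2) := by
      rw [← Real.finset_prod_rpow s _ (fun j _ => Real.rpow_nonneg (hzn j) _) (((m:ℝ)+1)/2)]
      refine Finset.prod_congr rfl fun j _ => ?_
      rw [← Real.rpow_mul (hzn j)]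
      rw [show ((m:ℝ)+1)⁻¹ * (((m:ℝ)+1)/2) = 2⁻¹ by field_simp]
      simp only [hz, ha]
      rw [show Complex.normSq (d j) = ‖d j‖ ^ (2:ℕ) from (Complex.sq_norm _).symm]
      rw [← Real.rpow_natCast ‖d j‖ 2, ← Real.rpow_mul (by positivity)]
      norm_num
    have hfinal : (∏ j ∈ s, a j) ≤ ((((m:ℝ)+1))⁻¹ * base) ^ (((m:ℝ)+1)/2) := by
      rw [hlift]
      exact Real.rpow_le_rpow (Finset.prod_nonneg fun j _ => Real.rpow_nonneg (hzn j) _)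
        (hgm.trans harith) (by positivity)
    have hsplit : ((((m:ℝ)+1))⁻¹ * base) ^ (((m:ℝ)+1)/2)
        = ((((m:ℝ)+1))⁻¹) ^ (((m:ℝ)+1)/2) * base ^ (((m:ℝ)+1)/2) :=
      Real.mul_rpow (by positivity) hbase_nonneg
    rw [hexp]
    rw [show (((m+2:ℕ) : ℝ) - 1)⁻¹ = (((m:ℝ)+1))⁻¹ by push_cast; ring_nf]
    calc (allarb D : ℝ) ≤ ∏ j ∈ s, a j := habs
      _ ≤ _ := hfinal
      _ = _ := hsplit
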